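/- Let U(0) and U(α) be the 4×4 unitaries given in Eqs. (S: Usol zero/nonzero), namely U(0) = (1/√2)·[[1,i,0,0],[i,1,0,0],[0,0,−1,−i],[0,0,−i,−1]] and U(α) = (1/√2)·[[i,1,0,0],[−1,−i,0,0],[0,0,i,1],[0,0,−1,−i]]. Then for the input state ρ_h ⊗ ρ_m with arbitrary one-qubit density matrix ρ_h and ρ_m = (1/2)(|0⟩+i|1⟩)(⟨0|−i⟨1|), the reduced state of the second (measurement) qubit after applying U(0) is |1⟩⟨1| and after applying U(α) is |0⟩⟨0|; hence measuring the second qubit in the computational basis perfectly discriminates the two cases regardless of ρ_h. -/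

import Mathlib

open Matrix Kronecker ComplexOrder

/-- Partial trace over the hidden (first) qubit. -/
noncomputable def ptraceH (M : Matrix (Fin 2 × Fin 2) (Fin 2 × Fin 2) ℂ) :
    Matrix (Fin 2) (Fin 2) ℂ :=
  Matrix.of fun i j => ∑ k : Fin 2, M (k, i) (k, j)

/-- `U(0) = (1/√2)·[[1,i,0,0],[i,1,0,0],[0,0,−1,−i],[0,0,−i,−1]]` (block form). -/
noncomputable def U₀ : Matrix (Fin 2 × Fin 2) (Fin 2 × Fin 2) ℂ :=
  ((Real.sqrt 2 : ℂ))⁻¹ •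
    ((!![1, 0; 0, 0] : Matrix (Fin 2) (Fin 2) ℂ) ⊗ₖ !![1, Complex.I; Complex.I, 1] +
      (!![0, 0; 0, 1] : Matrix (Fin 2) (Fin 2) ℂ) ⊗ₖ !![-1, -Complex.I; -Complex.I, -1])

/-- `U(α) = (1/√2)·[[i,1,0,0],[−1,−i,0,0],[0,0,i,1],[0,0,−1,−i]]` (block form). -/
noncomputable def Uα : Matrix (Fin 2 × Fin 2) (Fin 2 × Fin 2) ℂ :=
  ((Real.sqrt 2 : ℂ))⁻¹ •
    ((1 : Matrix (Fin 2) (Fin 2) ℂ) ⊗ₖ !![Complex.I, 1; -1, -Complex.I])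

/-- `ρ_m = (1/2)(|0⟩+i|1⟩)(⟨0|−i⟨1|)`. -/
noncomputable def ρm : Matrix (Fin 2) (Fin 2) ℂ :=
  (1 / 2 : ℂ) • !![1, -Complex.I; Complex.I, 1]

/-!
`ρm` is the pure state `|ψ⟩⟨ψ|` with `ψ = (|0⟩ + i|1⟩)/√2`. Both unitaries factor as
`W ⊗ V` with `W` unitary on the hidden qubit (`W = Z` for `U(0)`, `W = 1` for `U(α)`), so the
reduced state of the measurement qubit is `Tr ρ_h • V ρm V† = V ρm V†`, independent of `ρ_h`.
The two factors `V` map `ψ` to `i|1⟩` and to `i|0⟩` respectively.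
-/

theorem Matrix.star_fin_two {α : Type*} [Star α] (a b c d : α) :
    star !![a, b; c, d] = !![star a, star c; star b, star d] := by
  ext i j
  fin_cases i, j <;> rfl

theorem smul_mul_mul_star_smul {R A : Type*} [CommSemiring R] [StarRing R] [Semiring A]
    [StarRing A] [Algebra R A] [StarModule R A] (c : R) (a x : A) :
    c • a * x * star (c • a) = (c * star c) • (a * x * star a) := by
  rw [star_smul, smul_mul_assoc, smul_mul_assoc, mul_smul_comm, smul_smul, mul_comm]

theorem ptraceH_kronecker (P Q : Matrix (Fin 2) (Fin 2) ℂ) :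
    ptraceH (P ⊗ₖ Q) = P.trace • Q := by
  ext i j
  simp [ptraceH, Matrix.trace, add_mul]

theorem ptraceH_kronecker_mul_kronecker_mul_star {W : Matrix (Fin 2) (Fin 2) ℂ}
    (hW : W ∈ unitary _) (V ρ σ : Matrix (Fin 2) (Fin 2) ℂ) :
    ptraceH ((W ⊗ₖ V) * (ρ ⊗ₖ σ) * star (W ⊗ₖ V)) = ρ.trace • (V * σ * star V) := by
  rw [star_eq_conjTranspose, conjTranspose_kronecker, ← mul_kronecker_mul,
    ← mul_kronecker_mul, ptraceH_kronecker, trace_mul_cycle, ← star_eq_conjTranspose,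
    ← star_eq_conjTranspose, Unitary.star_mul_self_of_mem hW, one_mul]

def pauliZ : Matrix (Fin 2) (Fin 2) ℂ := !![1, 0; 0, -1]

theorem pauliZ_mem_unitary : pauliZ ∈ unitary _ := by
  rw [Unitary.mem_iff, pauliZ, star_fin_two, mul_fin_two, one_fin_two]
  norm_num

noncomputable def V₀ : Matrix (Fin 2) (Fin 2) ℂ :=
  (Real.sqrt 2 : ℂ)⁻¹ • !![1, Complex.I; Complex.I, 1]

noncomputable def Vα : Matrix (Fin 2) (Fin 2) ℂ :=
  (Real.sqrt 2 : ℂ)⁻¹ • !![Complex.I, 1; -1, -Complex.I]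

theorem U₀_eq_pauliZ_kronecker : U₀ = pauliZ ⊗ₖ V₀ := by
  rw [U₀, V₀, kronecker_smul]
  congr 1
  ext ⟨a, b⟩ ⟨c, d⟩
  fin_cases a, b, c, d <;> simp [pauliZ]

theorem Uα_eq_one_kronecker : Uα = 1 ⊗ₖ Vα := by
  rw [Uα, Vα, kronecker_smul]

theorem inv_sqrt_two_mul_star : (Real.sqrt 2 : ℂ)⁻¹ * star (Real.sqrt 2 : ℂ)⁻¹ = 1 / 2 := by
  rw [← Complex.ofReal_inv, Complex.star_def, Complex.conj_ofReal, ← Complex.ofReal_mul,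
    ← mul_inv, Real.mul_self_sqrt zero_le_two]
  simp

theorem V₀_mul_ρm_mul_star : V₀ * ρm * star V₀ = !![0, 0; 0, 1] := by
  rw [V₀, smul_mul_mul_star_smul, inv_sqrt_two_mul_star, ρm, star_fin_two, mul_smul_comm,
    smul_mul_assoc, mul_fin_two, mul_fin_two, smul_smul]
  ext i j
  fin_cases i, j <;> norm_num [Complex.ext_iff]

theorem Vα_mul_ρm_mul_star : Vα * ρm * star Vα = !![1, 0; 0, 0] := by
  rw [Vα, smul_mul_mul_star_smul, inv_sqrt_two_mul_star, ρm, star_fin_two, mul_smul_comm,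
    smul_mul_assoc, mul_fin_two, mul_fin_two, smul_smul]
  ext i j
  fin_cases i, j <;> norm_num [Complex.ext_iff]

theorem stmt_15_general (ρh : Matrix (Fin 2) (Fin 2) ℂ) (htr : ρh.trace = 1) :
    ptraceH (U₀ * (ρh ⊗ₖ ρm) * star U₀) = !![0, 0; 0, 1] ∧
    ptraceH (Uα * (ρh ⊗ₖ ρm) * star Uα) = !![1, 0; 0, 0] := by
  constructor
  · rw [U₀_eq_pauliZ_kronecker,
      ptraceH_kronecker_mul_kronecker_mul_star pauliZ_mem_unitary, htr, one_smul,
      V₀_mul_ρm_mul_star]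
  · rw [Uα_eq_one_kronecker, ptraceH_kronecker_mul_kronecker_mul_star (one_mem _), htr,
      one_smul, Vα_mul_ρm_mul_star]

/-- For any one-qubit density matrix `ρ_h`, the reduced state of the measurement qubit
after `U(0)` is `|1⟩⟨1|` and after `U(α)` is `|0⟩⟨0|`: perfect discrimination regardless
of the hidden state. -/
theorem stmt_15 (ρh : Matrix (Fin 2) (Fin 2) ℂ) (hρh : ρh.PosSemidef) (htr : ρh.trace = 1) :
    ptraceH (U₀ * (ρh ⊗ₖ ρm) * star U₀) = !![0, 0; 0, 1] ∧
    ptraceH (Uα * (ρh ⊗ₖ ρm) * star Uα) = !![1, 0; 0, 0] :=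
  stmt_15_general ρh htr
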